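/- Let A ∈ ℂ^{n1×n2×n3} and G ∈ ℂ^{n2×n1×n3}. If A is invertible along G, then A^{∥G} = G *_c (G *_c A *_c G)^† *_c G, where (G *_c A *_c G)^† is the Moore-Penrose inverse of G *_c A *_c G. -/

import Mathlib

noncomputable section

/-- A third-order tensor: a family of frontal slices. -/
abbrev Tensor (n1 n2 n3 : ℕ) : Type := Fin n3 → Matrix (Fin n1) (Fin n2) ℂ

namespace Tensor

/-- The block Toeplitz-plus-Hankel matrix `mat(A)` associated to a tensor. -/
def matT {n1 n2 n3 : ℕ} (A : Tensor n1 n2 n3) :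
    Matrix (Fin n3 × Fin n1) (Fin n3 × Fin n2) ℂ := fun p q =>
  A ⟨p.1.1 - q.1.1 + (q.1.1 - p.1.1), by
        have h1 := p.1.isLt; have h2 := q.1.isLt; omega⟩ p.2 q.2 +
    (if h : p.1.1 + q.1.1 + 2 ≤ n3 then A ⟨p.1.1 + q.1.1 + 1, by omega⟩ p.2 q.2
     else if h2 : n3 ≤ p.1.1 + q.1.1 then
       A ⟨2 * n3 - (p.1.1 + q.1.1) - 1, by have h1 := p.1.isLt; omega⟩ p.2 q.2
     else 0)

/-- `ten`, the inverse of `mat` on its range: the slices of a tensor are recovered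
from the first block-column of its `mat` by an alternating sum. -/
def tenT {n1 n2 n3 : ℕ} (M : Matrix (Fin n3 × Fin n1) (Fin n3 × Fin n2) ℂ) :
    Tensor n1 n2 n3 := fun i => Matrix.of fun a b =>
  ∑ t : Fin n3, if i.1 ≤ t.1 then (-1 : ℂ) ^ (t.1 - i.1) * M (t, a) (⟨0, i.pos⟩, b) else 0

/-- The C-product of two tensors: the unique tensor whose `mat` is `mat(A) * mat(B)`. -/
def cmul {n1 n2 l n3 : ℕ} (A : Tensor n1 n2 n3) (B : Tensor n2 l n3) : Tensor n1 l n3 :=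
  tenT (matT A * matT B)

/-- The conjugate transpose of a tensor, taken slice-wise. -/
def conjT {n1 n2 n3 : ℕ} (A : Tensor n1 n2 n3) : Tensor n2 n1 n3 := fun i => (A i).conjTranspose

/-- The identity tensor: the tensor whose `mat` is the identity matrix. -/
def idT {n n3 : ℕ} : Tensor n n n3 := fun i => if i.1 = 0 then 1 else 0

/-- A tensor is unitary if `Qᴴ *c Q = Q *c Qᴴ = I`. -/
def Unitary {n n3 : ℕ} (Q : Tensor n n n3) : Prop :=
  cmul (conjT Q) Q = idT ∧ cmul Q (conjT Q) = idT

/-- `X` is the inverse of the square tensor `B` under the C-product. -/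
def IsInverse {n n3 : ℕ} (B X : Tensor n n n3) : Prop :=
  cmul B X = idT ∧ cmul X B = idT

/-- `X` is the Moore-Penrose inverse of `A` under the C-product. -/
def IsMP {n1 n2 n3 : ℕ} (A : Tensor n1 n2 n3) (X : Tensor n2 n1 n3) : Prop :=
  cmul (cmul A X) A = A ∧ cmul (cmul X A) X = X ∧
    conjT (cmul A X) = cmul A X ∧ conjT (cmul X A) = cmul X A

/-- Powers of a square tensor with respect to the C-product. -/
def cpow {n n3 : ℕ} (A : Tensor n n n3) : ℕ → Tensor n n n3
  | 0 => idT
  | m + 1 => cmul (cpow A m) A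

/-- `ind(A) = k`: `k` is the smallest nonnegative integer with
`rank(mat(A)^k) = rank(mat(A)^(k+1))`. -/
def IsIndex {n n3 : ℕ} (A : Tensor n n n3) (k : ℕ) : Prop :=
  (matT A ^ k).rank = (matT A ^ (k + 1)).rank ∧
    ∀ j < k, (matT A ^ j).rank ≠ (matT A ^ (j + 1)).rank

/-- `X` is the Drazin inverse of `A` (of index `k`) under the C-product. -/
def IsDrazin {n n3 : ℕ} (A : Tensor n n n3) (k : ℕ) (X : Tensor n n n3) : Prop :=
  cmul (cpow A (k + 1)) X = cpow A k ∧ cmul (cmul X A) X = X ∧ cmul A X = cmul X A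

/-- `X` is an inverse of `A` along `G` under the C-product. -/
def IsInvAlong {n1 n2 n3 : ℕ} (A : Tensor n1 n2 n3) (G X : Tensor n2 n1 n3) : Prop :=
  cmul (cmul X A) G = G ∧ cmul (cmul G A) X = G ∧
    (∃ U : Tensor n1 n1 n3, X = cmul G U) ∧
    (∃ V : Tensor n2 n2 n3, conjT X = cmul (conjT G) V)

/-- All frontal slices are diagonal. -/
def FDiag {n1 n2 n3 : ℕ} (A : Tensor n1 n2 n3) : Prop :=
  ∀ (i : Fin n3) (a : Fin n1) (b : Fin n2), (a : ℕ) ≠ (b : ℕ) → A i a b = 0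

/-- All frontal slices are upper triangular. -/
def FUpper {n1 n2 n3 : ℕ} (A : Tensor n1 n2 n3) : Prop :=
  ∀ (i : Fin n3) (a : Fin n1) (b : Fin n2), (b : ℕ) < (a : ℕ) → A i a b = 0

/-- All frontal slices are lower triangular. -/
def FLower {n1 n2 n3 : ℕ} (A : Tensor n1 n2 n3) : Prop :=
  ∀ (i : Fin n3) (a : Fin n1) (b : Fin n2), (a : ℕ) < (b : ℕ) → A i a b = 0

/-- Slice-wise 2×2 block tensor `[[A, B],[C, D]]`. -/
def blockT {r s t u n3 : ℕ} (A : Tensor r t n3) (B : Tensor r u n3)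
    (C : Tensor s t n3) (D : Tensor s u n3) : Tensor (r + s) (t + u) n3 := fun i =>
  Matrix.reindex finSumFinEquiv finSumFinEquiv (Matrix.fromBlocks (A i) (B i) (C i) (D i))

/-- The mode-3 product of a tensor with an `n3 × n3` matrix. -/
def mode3 {n1 n2 n3 : ℕ} (A : Tensor n1 n2 n3) (M : Matrix (Fin n3) (Fin n3) ℂ) :
    Tensor n1 n2 n3 := fun l => ∑ i, M l i • A i

end Tensor

open Tensor

/-! `mat A` is the block Toeplitz-plus-Hankel matrix `(f (i - j) + f (i + j + 1))ᵢⱼ` of the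
even, `2 n₃`-periodic extension `f` of the slices of `A` (zero at `n₃`), and the product of two
such matrices is the one of the cyclic convolution of the extensions. So `mat` is injective,
multiplicative and compatible with `ᴴ`, which makes the C-product associative with
`(A *c B)ᴴ = Bᴴ *c Aᴴ`. The range conditions on an inverse `X` of `A` along `G` then give
`G = (G A G) U` and `G = V (G A G)`, and `(G A G) P (G A G) = G A G` turns these into the
defining identities of `G P G`. -/

open Finset
open scoped Matrix

theorem ZMod.sum_two_mul_eq_sum_fin {M : Type*} [AddCommMonoid M] {n : ℕ} [NeZero n]
    (F : ZMod (2 * n) → M) :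
    ∑ t, F t = ∑ u : Fin n, (F (u : ℕ) + F (-((u : ℕ) + 1))) := by
  let k : Fin n ⊕ Fin n → ℕ := Sum.elim (fun u => u) (fun u => 2 * n - 1 - u)
  have hk : ∀ x, k x < 2 * n := by rintro (u | u) <;> simp [k] <;> omega
  have hinj : Function.Injective fun x => (k x : ZMod (2 * n)) := by
    intro x y hxy
    rw [ZMod.natCast_eq_natCast_iff', Nat.mod_eq_of_lt (hk x), Nat.mod_eq_of_lt (hk y)] at hxy
    rcases x with u | u <;> rcases y with v | v <;> simp [k, Fin.ext_iff] at hxy ⊢ <;> omega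
  have hbij : Function.Bijective fun x => (k x : ZMod (2 * n)) :=
    (Fintype.bijective_iff_injective_and_card _).2 ⟨hinj, by simp; ring⟩
  rw [← Fintype.sum_bijective _ hbij (fun x => F (k x)) F (fun _ => rfl), Fintype.sum_sum_type,
    ← sum_add_distrib]
  refine sum_congr rfl fun u _ => ?_
  have hu := u.isLt
  simp only [k, Sum.elim_inl, Sum.elim_inr]
  congr 2
  rw [Nat.cast_sub (by omega), Nat.cast_sub (by omega), ZMod.natCast_self]
  push_cast; ring

theorem ZMod.natAbs_valMinAbs_natCast_sub {n i j : ℕ} (hi : i < n) (hj : j < n) :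
    ((i : ZMod (2 * n)) - j).valMinAbs.natAbs = i - j + (j - i) := by
  have : NeZero n := ⟨by omega⟩
  have h : ((i : ZMod (2 * n)) - j).valMinAbs = (i : ℤ) - j := by
    rw [ZMod.valMinAbs_spec]
    refine ⟨by push_cast; ring, ?_⟩
    simp only [Set.mem_Ioc]; push_cast; omega
  rw [h]; omega

theorem ZMod.natAbs_valMinAbs_natCast_add_add_one {n i j : ℕ} (hi : i < n) (hj : j < n) :
    ((i : ZMod (2 * n)) + j + 1).valMinAbs.natAbs = min (i + j + 1) (2 * n - (i + j + 1)) := by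
  have : NeZero n := ⟨by omega⟩
  rw [ZMod.valMinAbs_natAbs_eq_min,
    show (i : ZMod (2 * n)) + j + 1 = ((i + j + 1 : ℕ) : ZMod (2 * n)) by push_cast; ring,
    ZMod.val_cast_of_lt (by omega)]

theorem Finset.sum_range_neg_one_pow_mul_add {R : Type*} [CommRing R] (g : ℕ → R) (m : ℕ) :
    ∑ k ∈ range m, (-1) ^ k * (g k + g (k + 1)) = g 0 - (-1) ^ m * g m := by
  induction m with
  | zero => simp
  | succ m ih => rw [sum_range_succ, ih, pow_succ]; ring

theorem Fin.sum_ite_le_eq_sum_range {M : Type*} [AddCommMonoid M] {n : ℕ} (i : Fin n)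
    (F : ℕ → M) :
    ∑ t : Fin n, (if (i : ℕ) ≤ t then F t else 0) = ∑ k ∈ range (n - i), F (i + k) := by
  rw [Fin.sum_univ_eq_sum_range (fun t => if (i : ℕ) ≤ t then F t else 0) n, ← sum_filter,
    range_eq_Ico, Ico_filter_le, max_eq_right (Nat.zero_le _), sum_Ico_eq_sum_range]

section ToeplitzHankel

variable {R α β γ : Type*} {n : ℕ}

def toeplitzHankel [Add R] (f : ZMod (2 * n) → Matrix α β R) :
    Matrix (Fin n × α) (Fin n × β) R :=
  fun p q => (f ((p.1 : ℕ) - (q.1 : ℕ)) + f ((p.1 : ℕ) + (q.1 : ℕ) + 1)) p.2 q.2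

theorem toeplitzHankel_sub [AddCommGroup R] (f g : ZMod (2 * n) → Matrix α β R) :
    toeplitzHankel (f - g) = toeplitzHankel f - toeplitzHankel g := by
  ext p q
  simp only [toeplitzHankel, Pi.sub_apply, Matrix.sub_apply, Matrix.add_apply]
  abel

theorem conjTranspose_toeplitzHankel [AddMonoid R] [StarAddMonoid R]
    {f : ZMod (2 * n) → Matrix α β R} (hf : f.Even) :
    (toeplitzHankel f)ᴴ = toeplitzHankel fun z => (f z)ᴴ := by
  ext ⟨i, a⟩ ⟨j, b⟩
  rw [Matrix.conjTranspose_apply, toeplitzHankel, toeplitzHankel, ← neg_sub, hf,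
    add_comm ((j : ℕ) : ZMod (2 * n))]
  simp only [Matrix.add_apply, Matrix.conjTranspose_apply, star_add]

variable [NeZero n] [Fintype β] [NonUnitalNonAssocSemiring R]

def cyclicConv (f : ZMod (2 * n) → Matrix α β R) (g : ZMod (2 * n) → Matrix β γ R)
    (z : ZMod (2 * n)) : Matrix α γ R :=
  ∑ t, f (z - t) * g t

theorem cyclicConv_eq_sum_shift (f : ZMod (2 * n) → Matrix α β R)
    (g : ZMod (2 * n) → Matrix β γ R) (z w : ZMod (2 * n)) :
    cyclicConv f g z = ∑ t, f (z + w - t) * g (t - w) := by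
  rw [cyclicConv, ← (Equiv.subRight w).sum_comp]
  simp only [Equiv.subRight_apply, sub_sub_eq_add_sub]

theorem sum_fin_mul_eq_cyclicConv (f : ZMod (2 * n) → Matrix α β R)
    {g : ZMod (2 * n) → Matrix β γ R} (hg : g.Even) (x y : ZMod (2 * n)) :
    ∑ u : Fin n,
        (f (x - (u : ℕ)) + f (x + (u : ℕ) + 1)) * (g ((u : ℕ) - y) + g ((u : ℕ) + y + 1))
      = cyclicConv f g (x - y) + cyclicConv f g (x + y + 1) := by
  rw [cyclicConv_eq_sum_shift f g _ y, cyclicConv_eq_sum_shift f g _ (-(y + 1)),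
    ZMod.sum_two_mul_eq_sum_fin, ZMod.sum_two_mul_eq_sum_fin, ← sum_add_distrib]
  refine sum_congr rfl fun u _ => ?_
  set v : ZMod (2 * n) := ((u : ℕ) : ZMod (2 * n))
  rw [show x - y + y = x by ring, show x + y + 1 + -(y + 1) = x by ring,
    show x - -(v + 1) = x + v + 1 by ring, show v - -(y + 1) = v + y + 1 by ring,
    show -(v + 1) - y = -(v + y + 1) by ring, hg, show -(v + 1) - -(y + 1) = -(v - y) by ring,
    hg, Matrix.add_mul, Matrix.mul_add, Matrix.mul_add]
  abel

theorem toeplitzHankel_mul (f : ZMod (2 * n) → Matrix α β R)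
    {g : ZMod (2 * n) → Matrix β γ R} (hg : g.Even) :
    toeplitzHankel f * toeplitzHankel g = toeplitzHankel (cyclicConv f g) := by
  ext ⟨i, a⟩ ⟨j, b⟩
  rw [toeplitzHankel, ← sum_fin_mul_eq_cyclicConv f hg, Matrix.mul_apply, Fintype.sum_prod_type,
    Matrix.sum_apply]
  simp only [toeplitzHankel, Matrix.mul_apply]

theorem cyclicConv_even {f : ZMod (2 * n) → Matrix α β R} {g : ZMod (2 * n) → Matrix β γ R}
    (hf : f.Even) (hg : g.Even) : (cyclicConv f g).Even := fun z => by
  refine Fintype.sum_equiv (Equiv.neg _) _ _ fun t => ?_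
  rw [Equiv.neg_apply, hg, ← hf, neg_sub', neg_neg, sub_neg_eq_add]

end ToeplitzHankel

section AltSign

variable {R : Type*} [Ring R] {n : ℕ}

def altSign (z : ZMod (2 * n)) : R := (-1) ^ z.val

theorem altSign_add [NeZero n] (a b : ZMod (2 * n)) :
    (altSign (a + b) : R) = altSign a * altSign b := by
  rw [altSign, altSign, altSign, ZMod.val_add, ← pow_add, neg_one_pow_eq_pow_mod_two,
    Nat.mod_mod_of_dvd _ (dvd_mul_right 2 n), ← neg_one_pow_eq_pow_mod_two]

theorem altSign_mul_self (z : ZMod (2 * n)) : (altSign z : R) * altSign z = 1 := by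
  rw [altSign, ← pow_add, ← two_mul, pow_mul, neg_one_sq, one_pow]

theorem altSign_even [NeZero n] : (altSign : ZMod (2 * n) → R).Even := fun z => by
  rw [← mul_one (altSign (-z)), ← altSign_mul_self z, ← mul_assoc, ← altSign_add,
    neg_add_cancel, altSign, ZMod.val_zero, pow_zero, one_mul]

theorem altSign_natCast_add_add_one [NeZero n] (i j : ℕ) (hj : j < n) :
    (altSign ((i : ZMod (2 * n)) + (j : ZMod (2 * n)) + 1) : R)
      = -altSign ((i : ZMod (2 * n)) - (j : ZMod (2 * n))) := by
  rw [show (i : ZMod (2 * n)) + (j : ZMod (2 * n)) + 1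
      = i - j + ((2 * j + 1 : ℕ) : ZMod (2 * n)) by push_cast; ring, altSign_add]
  simp only [altSign]
  rw [ZMod.val_cast_of_lt (by omega), pow_succ, pow_mul, neg_one_sq, one_pow, one_mul, mul_neg_one]

theorem toeplitzHankel_altSign_smul [NeZero n] {α β : Type*} (c : Matrix α β R) :
    toeplitzHankel (fun z : ZMod (2 * n) => (altSign z : R) • c) = 0 := by
  ext ⟨i, a⟩ ⟨j, b⟩
  rw [toeplitzHankel, ← add_smul, altSign_natCast_add_add_one _ _ j.isLt, add_neg_cancel,
    zero_smul, Matrix.zero_apply, Matrix.zero_apply]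

end AltSign

namespace Tensor

variable {n1 n2 l n3 : ℕ}

def slice (A : Tensor n1 n2 n3) (k : ℕ) : Matrix (Fin n1) (Fin n2) ℂ :=
  if h : k < n3 then A ⟨k, h⟩ else 0

def evenExt (A : Tensor n1 n2 n3) (z : ZMod (2 * n3)) : Matrix (Fin n1) (Fin n2) ℂ :=
  slice A z.valMinAbs.natAbs

theorem matT_eq_toeplitzHankel (A : Tensor n1 n2 n3) : matT A = toeplitzHankel (evenExt A) := by
  ext ⟨i, a⟩ ⟨j, b⟩
  have := i.isLt; have := j.isLt
  simp only [matT, toeplitzHankel, Matrix.add_apply, evenExt, slice,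
    ZMod.natAbs_valMinAbs_natCast_sub i.isLt j.isLt,
    ZMod.natAbs_valMinAbs_natCast_add_add_one i.isLt j.isLt]
  congr 1
  · rw [dif_pos (by omega)]
  · split_ifs <;> first | rfl | omega | (congr; omega)

theorem evenExt_even (A : Tensor n1 n2 n3) : (evenExt A).Even := fun z => by
  rw [evenExt, evenExt, ZMod.natAbs_valMinAbs_neg]

theorem evenExt_natCast (A : Tensor n1 n2 n3) {k : ℕ} (hk : k ≤ n3) :
    evenExt A k = slice A k := by
  rw [evenExt, ZMod.valMinAbs_natCast_of_le_half (by omega), Int.natAbs_natCast]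

theorem evenExt_eq_of_even [NeZero n3] {h : ZMod (2 * n3) → Matrix (Fin n1) (Fin n2) ℂ}
    (heven : h.Even) (hn : h n3 = 0) : evenExt (fun k : Fin n3 => h (k : ℕ)) = h := by
  funext z
  have hle := ZMod.natAbs_valMinAbs_le z
  have hfold : h z.valMinAbs.natAbs = h z := by
    rw [ZMod.natCast_natAbs_valMinAbs]
    split_ifs
    exacts [rfl, heven z]
  rw [evenExt, slice]
  split_ifs with hlt
  · exact hfold
  · rw [← hfold, show z.valMinAbs.natAbs = n3 by omega, hn]

theorem evenExt_conjT (A : Tensor n1 n2 n3) (z : ZMod (2 * n3)) :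
    evenExt (conjT A) z = (evenExt A z)ᴴ := by
  simp only [evenExt, slice]
  split_ifs
  exacts [rfl, Matrix.conjTranspose_zero.symm]

theorem tenT_matT (A : Tensor n1 n2 n3) : tenT (matT A) = A := by
  funext i
  ext a b
  have hcol : ∀ t : Fin n3,
      matT A (t, a) (⟨0, i.pos⟩, b) = slice A t a b + slice A (t + 1) a b := by
    intro t
    rw [matT_eq_toeplitzHankel, toeplitzHankel, Nat.cast_zero, sub_zero, add_zero,
      ← Nat.cast_add_one, evenExt_natCast A t.isLt.le, evenExt_natCast A t.isLt,
      Matrix.add_apply]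
  simp only [tenT, Matrix.of_apply, hcol]
  rw [Fin.sum_ite_le_eq_sum_range i
    (fun t => (-1 : ℂ) ^ (t - i) * (slice A t a b + slice A (t + 1) a b))]
  simp only [Nat.add_sub_cancel_left]
  refine (Finset.sum_range_neg_one_pow_mul_add (fun k => slice A (i + k) a b) (n3 - i)).trans ?_
  simp [Nat.add_sub_cancel' i.isLt.le, slice]

theorem exists_matT_eq_mul [NeZero n3] (A : Tensor n1 n2 n3) (B : Tensor n2 l n3) :
    ∃ P : Tensor n1 l n3, matT P = matT A * matT B := by
  set h := cyclicConv (evenExt A) (evenExt B)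
  have hh : h.Even := cyclicConv_even (evenExt_even A) (evenExt_even B)
  -- `h` need not vanish at `n3`, as the even extension of a tensor does; subtracting a multiple
  -- of the alternating sign, which `toeplitzHankel` annihilates, repairs this.
  set c := (altSign (n3 : ZMod (2 * n3)) : ℂ) • h n3
  set h' := h - fun z => (altSign z : ℂ) • c
  have heven : h'.Even := fun z => by simp only [h', Pi.sub_apply, hh z, altSign_even z]
  have hvanish : h' n3 = 0 := by
    simp only [h', c, Pi.sub_apply, smul_smul, altSign_mul_self, one_smul, sub_self]
  refine ⟨fun k => h' k, ?_⟩
  rw [matT_eq_toeplitzHankel, evenExt_eq_of_even heven hvanish, toeplitzHankel_sub,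
    toeplitzHankel_altSign_smul, sub_zero, matT_eq_toeplitzHankel, matT_eq_toeplitzHankel,
    toeplitzHankel_mul _ (evenExt_even B)]

theorem matT_injective : Function.Injective (matT : Tensor n1 n2 n3 → _) := fun A B h => by
  rw [← tenT_matT A, ← tenT_matT B, h]

theorem matT_cmul (A : Tensor n1 n2 n3) (B : Tensor n2 l n3) :
    matT (cmul A B) = matT A * matT B := by
  rcases Nat.eq_zero_or_pos n3 with rfl | hn3
  · exact Subsingleton.elim _ _
  · have : NeZero n3 := NeZero.of_pos hn3
    obtain ⟨P, hP⟩ := exists_matT_eq_mul A B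
    rw [cmul, ← hP, tenT_matT]

theorem matT_conjT (A : Tensor n1 n2 n3) : matT (conjT A) = (matT A)ᴴ := by
  rw [matT_eq_toeplitzHankel, matT_eq_toeplitzHankel,
    conjTranspose_toeplitzHankel (evenExt_even A), funext (evenExt_conjT A)]

theorem cmul_assoc {m : ℕ} (A : Tensor n1 n2 n3) (B : Tensor n2 l n3) (C : Tensor l m n3) :
    cmul (cmul A B) C = cmul A (cmul B C) :=
  matT_injective <| by simp only [matT_cmul, Matrix.mul_assoc]

theorem conjT_conjT (A : Tensor n1 n2 n3) : conjT (conjT A) = A :=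
  funext fun i => (A i).conjTranspose_conjTranspose

theorem conjT_cmul (A : Tensor n1 n2 n3) (B : Tensor n2 l n3) :
    conjT (cmul A B) = cmul (conjT B) (conjT A) :=
  matT_injective <| by simp only [matT_conjT, matT_cmul, Matrix.conjTranspose_mul]

variable {A : Tensor n1 n2 n3} {G X : Tensor n2 n1 n3}

theorem IsInvAlong.exists_eq_cmul_right (h : IsInvAlong A G X) :
    ∃ U : Tensor n1 n1 n3, G = cmul (cmul (cmul G A) G) U := by
  obtain ⟨-, hGAX, ⟨U, rfl⟩, -⟩ := h
  exact ⟨U, ((cmul_assoc _ _ _).trans hGAX).symm⟩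

theorem IsInvAlong.exists_eq_cmul_left (h : IsInvAlong A G X) :
    ∃ V : Tensor n2 n2 n3, G = cmul V (cmul (cmul G A) G) := by
  obtain ⟨hXAG, -, -, V, hV⟩ := h
  have hX : X = cmul (conjT V) G := by rw [← conjT_conjT X, hV, conjT_cmul, conjT_conjT]
  refine ⟨conjT V, ?_⟩
  calc G = cmul (cmul X A) G := hXAG.symm
    _ = cmul (conjT V) (cmul (cmul G A) G) := by simp only [hX, cmul_assoc]

end Tensor

theorem stmt18 {n1 n2 n3 : ℕ} (A : Tensor n1 n2 n3) (G : Tensor n2 n1 n3)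
    (hinv : ∃ X, IsInvAlong A G X)
    (P : Tensor n1 n2 n3) (hP : IsMP (cmul (cmul G A) G) P) :
    IsInvAlong A G (cmul (cmul G P) G) := by
  obtain ⟨X, hX⟩ := hinv
  obtain ⟨U, hU⟩ := hX.exists_eq_cmul_right
  obtain ⟨V, hV⟩ := hX.exists_eq_cmul_left
  set m := cmul (cmul G A) G with hm
  refine ⟨?_, ?_, ⟨cmul P G, cmul_assoc G P G⟩, ⟨conjT (cmul G P), conjT_cmul _ _⟩⟩
  · calc cmul (cmul (cmul (cmul G P) G) A) G = cmul (cmul G P) m := by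
          simp only [hm, cmul_assoc]
      _ = cmul V (cmul (cmul m P) m) := by
          rw [hV]; simp only [cmul_assoc]
      _ = G := by rw [hP.1, ← hV]
  · calc cmul (cmul G A) (cmul (cmul G P) G) = cmul (cmul m P) G := by
          simp only [hm, cmul_assoc]
      _ = cmul (cmul (cmul m P) m) U := by
          rw [hU]; simp only [cmul_assoc]
      _ = G := by rw [hP.1, ← hU]
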